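/- arXiv:2409.08559 — 5 statements merged into one kernel-verified Lean document; each statement's English description precedes it below -/
import Mathlib

section
/- As n → ∞, the sum over m from 1 to n-1 of 1/(m²(n-m)) equals π²/(6n) + 2(log n)/n² + O(1/n²). -/
open Filter Asymptotics Real

lemma key_id (n : ℕ) (hn : 0 < n) :
    ∑ m ∈ Finset.Ioo 0 n, (1:ℝ)/(m^2*((n:ℝ)-m)) =
    (∑ m ∈ Finset.Ioo 0 n, (1:ℝ)/(m:ℝ)^2)/n + 2*(∑ m ∈ Finset.Ioo 0 n, (1:ℝ)/m)/n^2 := by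
  have h1 : ∀ m ∈ Finset.Ioo 0 n, (1:ℝ)/(m^2*((n:ℝ)-m)) =
      (1:ℝ)/(m:ℝ)^2/n + (1:ℝ)/m/n^2 + (1:ℝ)/((n:ℝ)-m)/n^2 := by
    intro m hm
    simp only [Finset.mem_Ioo] at hm
    have h0 : (0:ℝ) < m := by exact_mod_cast hm.1
    have h2 : (m:ℝ) < n := by exact_mod_cast hm.2
    have h3 : (0:ℝ) < (n:ℝ) - m := by linarith
    have h4 : (0:ℝ) < n := by positivity
    field_simp
    ring
  rw [Finset.sum_congr rfl h1, Finset.sum_add_distrib, Finset.sum_add_distrib]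
  have h5 : ∑ m ∈ Finset.Ioo 0 n, (1:ℝ)/((n:ℝ)-m)/n^2 =
      ∑ m ∈ Finset.Ioo 0 n, (1:ℝ)/m/n^2 := by
    apply Finset.sum_nbij' (i := fun m => n - m) (j := fun m => n - m)
    · intro a ha; simp only [Finset.mem_Ioo] at *; omega
    · intro a ha; simp only [Finset.mem_Ioo] at *; omega
    · intro a ha; simp only [Finset.mem_Ioo] at ha; omega
    · intro a ha; simp only [Finset.mem_Ioo] at ha; omega
    · intro a ha; simp only [Finset.mem_Ioo] at ha
      rw [Nat.cast_sub ha.2.le]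
  rw [h5, ← Finset.sum_div, ← Finset.sum_div]
  ring

lemma zeta_tail (n : ℕ) (hn : 1 ≤ n) :
    0 ≤ π^2/6 - ∑ m ∈ Finset.Ioo 0 n, (1:ℝ)/(m:ℝ)^2 ∧
    π^2/6 - ∑ m ∈ Finset.Ioo 0 n, (1:ℝ)/(m:ℝ)^2 ≤ 2/n := by
  have hsum := hasSum_zeta_two
  have hS : ∑ m ∈ Finset.Ioo 0 n, (1:ℝ)/(m:ℝ)^2 = ∑ m ∈ Finset.range n, (1:ℝ)/(m:ℝ)^2 := by
    apply Finset.sum_subset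
    · intro x hx; simp only [Finset.mem_Ioo, Finset.mem_range] at *; omega
    · intro x hx hx2
      simp only [Finset.mem_Ioo, Finset.mem_range] at *
      have : x = 0 := by omega
      simp [this]
  rw [hS]
  have hsummable := hsum.summable
  have htail : π^2/6 - ∑ m ∈ Finset.range n, (1:ℝ)/(m:ℝ)^2
      = ∑' i : ℕ, (1:ℝ)/((i+n:ℕ):ℝ)^2 := by
    have h := Summable.sum_add_tsum_nat_add n hsummable
    rw [← hsum.tsum_eq]
    push_cast at h ⊢
    linarith
  constructor
  · rw [htail]
    exact tsum_nonneg fun i => by positivity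
  · rw [htail]
    apply Real.tsum_le_of_sum_range_le (fun i => by positivity)
    intro N
    have h1 : ∑ i ∈ Finset.range N, (1:ℝ)/((i+n:ℕ):ℝ)^2
        ≤ ∑ i ∈ Finset.Ioo (n-1) (n+N), ((i:ℝ)^2)⁻¹ := by
      rw [show ∑ i ∈ Finset.range N, (1:ℝ)/((i+n:ℕ):ℝ)^2
          = ∑ i ∈ Finset.Ico n (n+N), ((i:ℝ)^2)⁻¹ by
        rw [Finset.sum_Ico_eq_sum_range]
        simp [add_comm, one_div]]
      apply Finset.sum_le_sum_of_subset_of_nonneg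
      · intro x hx; simp only [Finset.mem_Ico, Finset.mem_Ioo] at *; omega
      · intros; positivity
    refine h1.trans ((sum_Ioo_inv_sq_le (n-1) (n+N)).trans ?_)
    have h2 : ((n-1:ℕ):ℝ) + 1 = n := by
      have : ((n - 1 + 1 : ℕ) : ℝ) = (n : ℝ) := by norm_cast; omega
      push_cast at this; linarith
    rw [h2]

lemma harm_bounds (n : ℕ) (hn : 1 ≤ n) :
    |(∑ m ∈ Finset.Ioo 0 n, (1:ℝ)/m) - Real.log n| ≤ 1 := by
  have hIcc : Finset.Ioo 0 n = Finset.Icc 1 (n-1) := by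
    ext x; simp only [Finset.mem_Ioo, Finset.mem_Icc]; omega
  have hh : ∑ m ∈ Finset.Ioo 0 n, (1:ℝ)/m = (harmonic (n-1) : ℝ) := by
    rw [hIcc, harmonic_eq_sum_Icc]
    push_cast
    simp [one_div]
  rw [hh]
  have h1 : Real.log n ≤ (harmonic (n-1) : ℝ) := by
    have h := log_add_one_le_harmonic (n-1)
    have e : (n - 1 + 1 : ℕ) = n := by omega
    rwa [e] at h
  have h2 : (harmonic (n-1) : ℝ) ≤ 1 + Real.log n := by
    refine (harmonic_le_one_add_log (n-1)).trans ?_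
    have : Real.log ((n-1 : ℕ) : ℝ) ≤ Real.log n := by
      rcases Nat.eq_or_lt_of_le hn with h | h
      · rw [← h]; norm_num
      · exact Real.log_le_log (by exact_mod_cast Nat.sub_pos_of_lt h |>.trans_le le_rfl; )
          (by exact_mod_cast Nat.sub_le n 1)
    linarith
  rw [abs_le]
  constructor <;> linarith

theorem sum_one_div_m_sq_n_sub_m :
    (fun n : ℕ => (∑ m ∈ Finset.Ioo 0 n, (1 : ℝ) / (m ^ 2 * (n - m))) -
      (Real.pi ^ 2 / (6 * n) + 2 * Real.log n / (n : ℝ) ^ 2))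
      =O[atTop] (fun n : ℕ => 1 / (n : ℝ) ^ 2) := by
  rw [isBigO_iff]
  refine ⟨4, ?_⟩
  filter_upwards [eventually_ge_atTop 1] with n hn
  have hn0 : (0:ℝ) < n := by exact_mod_cast hn
  obtain ⟨ht1, ht2⟩ := zeta_tail n hn
  have hh := harm_bounds n hn
  set S2 := ∑ m ∈ Finset.Ioo 0 n, (1:ℝ)/(m:ℝ)^2 with hS2
  set S1 := ∑ m ∈ Finset.Ioo 0 n, (1:ℝ)/(m:ℝ) with hS1
  have hD : (∑ m ∈ Finset.Ioo 0 n, (1 : ℝ) / (m ^ 2 * ((n:ℝ) - m))) -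
      (Real.pi ^ 2 / (6 * n) + 2 * Real.log n / (n : ℝ) ^ 2)
      = (S2 - π^2/6)/n + 2*(S1 - Real.log n)/n^2 := by
    rw [key_id n hn, hS2, hS1]
    field_simp
    ring
  rw [hD]
  have hb1 : |(S2 - π^2/6)/n| ≤ 2/(n:ℝ)^2 := by
    rw [abs_div, abs_of_pos hn0, abs_sub_comm, abs_of_nonneg ht1]
    rw [div_le_div_iff₀ hn0 (by positivity)]
    have h := mul_le_mul_of_nonneg_right ht2 (le_of_lt (pow_pos hn0 2))
    have e : 2 / (n:ℝ) * (n:ℝ)^2 = 2 * n := by field_simp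
    rw [e] at h
    linarith
  have hb2 : |2*(S1 - Real.log n)/n^2| ≤ 2/(n:ℝ)^2 := by
    rw [abs_div, abs_of_pos (show (0:ℝ) < (n:ℝ)^2 by positivity)]
    gcongr
    rw [abs_mul, abs_two]
    linarith
  calc |(S2 - π^2/6)/n + 2*(S1 - Real.log n)/n^2|
      ≤ |(S2 - π^2/6)/n| + |2*(S1 - Real.log n)/n^2| := abs_add_le _ _
    _ ≤ 2/(n:ℝ)^2 + 2/(n:ℝ)^2 := add_le_add hb1 hb2
    _ ≤ 4 * |1/(n:ℝ)^2| := by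
        rw [abs_of_pos (show (0:ℝ) < 1/(n:ℝ)^2 by positivity)]
        field_simp
        norm_num
end

section
/- Fix an integer q ≥ 2. As n → ∞, the sum over m from 1 to n-1 of q^{-m/2}/(m(n-m)) equals log(1 + 1/(√q - 1))/n + O(1/n²). -/
/-!
Put `r = q^{-1/2} ∈ (0, 1)`, so that `log (1 + 1 / (√q - 1)) = -log (1 - r)`. The partial fraction
`1 / (m (n - m)) = (1 / m + 1 / (n - m)) / n` splits `n` times the sum into
`∑_{0<m<n} r^m / m`, which differs from `-log (1 - r)` by a tail of size `O(r^n) = O(1/n)`, and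
`∑_{0<m<n} r^m / (n - m) ≤ ∑ (m + 1) r^m / n = 1 / ((1 - r)^2 n)`.
-/

open Filter Asymptotics Real Finset

section

variable {r : ℝ}

lemma sum_Ioo_zero_succ (f : ℕ → ℝ) (n : ℕ) :
    ∑ m ∈ Ioo 0 (n + 1), f m = ∑ i ∈ range n, f (i + 1) := by
  rw [← Ico_add_one_left_eq_Ioo, sum_Ico_eq_sum_range]
  simp only [zero_add, add_tsub_cancel_right, add_comm 1]

lemma nat_mul_pow_le_inv_one_sub (hr0 : 0 ≤ r) (hr1 : r < 1) (n : ℕ) :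
    n * r ^ n ≤ (1 - r)⁻¹ :=
  calc n * r ^ n = ∑ k ∈ range n, r ^ n := by simp
    _ ≤ ∑ k ∈ range n, r ^ k := sum_le_sum fun k hk =>
        pow_le_pow_of_le_one hr0 hr1.le (mem_range.mp hk).le
    _ ≤ (1 - r)⁻¹ := (tsum_geometric_of_lt_one hr0 hr1).symm ▸
        Summable.sum_le_tsum _ (fun k _ => by positivity) (summable_geometric_of_lt_one hr0 hr1)

lemma abs_sum_Ioo_pow_div_add_log_le (hr0 : 0 ≤ r) (hr1 : r < 1) {n : ℕ} (hn : 0 < n) :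
    |∑ m ∈ Ioo 0 n, r ^ m / m + log (1 - r)| ≤ 1 / ((1 - r) ^ 2 * n) := by
  obtain ⟨k, rfl⟩ := Nat.exists_eq_add_one_of_ne_zero hn.ne'
  have h1r : 0 < 1 - r := by linarith
  have hr : |r| < 1 := by rwa [abs_of_nonneg hr0]
  have hlog := abs_log_sub_add_sum_range_le hr k
  rw [abs_of_nonneg hr0] at hlog
  rw [sum_Ioo_zero_succ]
  push_cast
  calc _ ≤ r ^ (k + 1) / (1 - r) := hlog
    _ = ((k : ℝ) + 1) * r ^ (k + 1) / ((1 - r) * ((k : ℝ) + 1)) := by field_simp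
    _ ≤ (1 - r)⁻¹ / ((1 - r) * ((k : ℝ) + 1)) := by
        gcongr; exact_mod_cast nat_mul_pow_le_inv_one_sub hr0 hr1 (k + 1)
    _ = 1 / ((1 - r) ^ 2 * ((k : ℝ) + 1)) := by field_simp

lemma sum_Ioo_pow_div_sub_le (hr0 : 0 ≤ r) (hr1 : r < 1) (n : ℕ) :
    ∑ m ∈ Ioo 0 n, r ^ m / (n - m) ≤ 1 / ((1 - r) ^ 2 * n) := by
  have hr : ‖r‖ < 1 := by rwa [norm_of_nonneg hr0]
  have hgeom := hasSum_choose_mul_geometric_of_norm_lt_one 1 hr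
  simp only [Nat.choose_one_right, Nat.cast_add, Nat.cast_one, one_add_one_eq_two] at hgeom
  -- `n ≤ (m + 1) (n - m)` because `1 ≤ n - m`
  have hterm : ∀ m ∈ Ioo 0 n, r ^ m / (n - m) ≤ (m + 1) * r ^ m / n := by
    intro m hm
    have hmn := (mem_Ioo.mp hm).2
    have hnm : (1 : ℝ) ≤ n - m := by
      rw [le_sub_iff_add_le']; exact_mod_cast hmn
    have hm : (0 : ℝ) ≤ m := m.cast_nonneg
    rw [div_le_div_iff₀ (by linarith) (by linarith)]
    nlinarith [mul_nonneg (pow_nonneg hr0 m) (mul_nonneg hm (sub_nonneg.2 hnm))]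
  calc ∑ m ∈ Ioo 0 n, r ^ m / (n - m) ≤ ∑ m ∈ Ioo 0 n, (m + 1) * r ^ m / n := sum_le_sum hterm
    _ = (∑ m ∈ Ioo 0 n, (m + 1) * r ^ m) / n := by rw [sum_div]
    _ ≤ 1 / (1 - r) ^ 2 / n := by
        gcongr
        exact hgeom.tsum_eq ▸ hgeom.summable.sum_le_tsum _ fun m _ => by positivity
    _ = 1 / ((1 - r) ^ 2 * n) := by rw [div_div]

lemma sum_Ioo_pow_div_mul_sub_add_log_div (r : ℝ) (n : ℕ) :
    ∑ m ∈ Ioo 0 n, r ^ m / (m * (n - m)) + log (1 - r) / n =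
      ((∑ m ∈ Ioo 0 n, r ^ m / m + log (1 - r)) + ∑ m ∈ Ioo 0 n, r ^ m / (n - m)) / n := by
  have hpartial : ∀ m ∈ Ioo 0 n, r ^ m / (m * (n - m)) = (r ^ m / m + r ^ m / (n - m)) / n := by
    intro m hm
    obtain ⟨hm0, hmn⟩ := mem_Ioo.mp hm
    have hm : (m : ℝ) ≠ 0 := Nat.cast_ne_zero.2 hm0.ne'
    have hnm : (n : ℝ) - m ≠ 0 := sub_ne_zero.2 (by exact_mod_cast hmn.ne')
    have hn : (n : ℝ) ≠ 0 := Nat.cast_ne_zero.2 (by omega)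
    field_simp
    ring
  rw [sum_congr rfl hpartial, ← sum_div, sum_add_distrib]
  ring

theorem isBigO_sum_Ioo_pow_div_mul_sub_add_log (hr0 : 0 ≤ r) (hr1 : r < 1) :
    (fun n : ℕ => ∑ m ∈ Ioo 0 n, r ^ m / (m * (n - m)) + log (1 - r) / n)
      =O[atTop] fun n : ℕ => 1 / (n : ℝ) ^ 2 := by
  refine IsBigO.of_bound (2 / (1 - r) ^ 2) ?_
  filter_upwards [eventually_gt_atTop 0] with n hn
  have hB : 0 ≤ ∑ m ∈ Ioo 0 n, r ^ m / (n - m) := sum_nonneg fun m hm => by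
    have : (m : ℝ) < n := by exact_mod_cast (mem_Ioo.mp hm).2
    have := pow_nonneg hr0 m
    positivity
  rw [sum_Ioo_pow_div_mul_sub_add_log_div, norm_div, Real.norm_natCast, norm_div, norm_one,
    norm_pow, Real.norm_natCast]
  calc _ ≤ (1 / ((1 - r) ^ 2 * n) + 1 / ((1 - r) ^ 2 * n)) / n := by
        gcongr
        refine (norm_add_le _ _).trans (add_le_add ?_ ?_)
        · exact abs_sum_Ioo_pow_div_add_log_le hr0 hr1 hn
        · rw [Real.norm_of_nonneg hB]; exact sum_Ioo_pow_div_sub_le hr0 hr1 n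
    _ = 2 / (1 - r) ^ 2 * (1 / n ^ 2) := by field_simp; ring

end

lemma rpow_neg_natCast_div_two {x : ℝ} (hx : 0 ≤ x) (m : ℕ) :
    x ^ (-(m : ℝ) / 2) = (√x)⁻¹ ^ m := by
  rw [neg_div, rpow_neg hx, div_eq_mul_one_div, mul_comm, rpow_mul hx, ← sqrt_eq_rpow,
    rpow_natCast, inv_pow]

lemma log_one_add_one_div_sub_one {s : ℝ} (hs0 : s ≠ 0) (hs1 : s ≠ 1) :
    log (1 + 1 / (s - 1)) = -log (1 - s⁻¹) := by
  have : s - 1 ≠ 0 := sub_ne_zero.2 hs1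
  rw [← log_inv]
  congr 1
  field_simp
  ring

theorem sum_q_pow_neg_half_div (q : ℕ) (hq : 2 ≤ q) :
    (fun n : ℕ => (∑ m ∈ Finset.Ioo 0 n, (q : ℝ) ^ (-(m : ℝ) / 2) / (m * (n - m))) -
      Real.log (1 + 1 / (Real.sqrt q - 1)) / n)
      =O[atTop] (fun n : ℕ => 1 / (n : ℝ) ^ 2) := by
  have hs : 1 < √(q : ℝ) := by
    rw [lt_sqrt zero_le_one, one_pow]
    exact_mod_cast hq
  have hr0 : 0 ≤ (√(q : ℝ))⁻¹ := by positivity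
  convert isBigO_sum_Ioo_pow_div_mul_sub_add_log hr0 (inv_lt_one_of_one_lt₀ hs) using 2 with n
  simp_rw [rpow_neg_natCast_div_two q.cast_nonneg,
    log_one_add_one_div_sub_one (by positivity) hs.ne', neg_div, sub_neg_eq_add]
end

section
/- As n → ∞, Σ_{m=1}^{n-1} (1/m)·log(1 - m/n) = -π²/6 + O((log n)/n). -/
/-!
Expanding `-log (1 - m/n) = ∑ₖ (m/n)^(k+1) / (k+1)` and exchanging the finite sum over `m`
with the series over `k` turns the sum into `-∑ₖ Tₖ / ((k+1) n^(k+1))`, where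
`Tₖ = ∑_{0<m<n} m^k`. Against `π²/6 = ∑ₖ 1/(k+1)²`, the `k`-th term of the difference is
`1/(k+1)` times the error of the left Riemann sum `n⁻¹ ∑ (m/n)^k` for `∫₀¹ x^k`, which lies in
`[0, 1/n]` because `x^k` is increasing. Bounding the terms by `1/((k+1) n)` for `k < n` and by
`1/(k+1)²` for `k ≥ n` gives, for the sum `S`, `0 ≤ S + π²/6 ≤ (H_n + 1)/n ≤ (2 + log n)/n`.
-/
open Filter Asymptotics Real Finset

theorem mul_sum_Ioo_pow_le_pow_succ (n k : ℕ) :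
    ((k : ℝ) + 1) * ∑ m ∈ Ioo 0 n, (m : ℝ) ^ k ≤ (n : ℝ) ^ (k + 1) := by
  have h := (pow_left_monotoneOn (M₀ := ℝ) (n := k)).mono (fun x hx => hx.1) |>.sum_le_integral
    (x₀ := 0) (a := n)
  rw [integral_pow] at h
  simp only [zero_add, ne_eq, Nat.add_eq_zero_iff, one_ne_zero, and_false,
    not_false_eq_true, zero_pow, sub_zero] at h
  rw [le_div_iff₀ (by positivity)] at h
  calc ((k : ℝ) + 1) * ∑ m ∈ Ioo 0 n, (m : ℝ) ^ k
      ≤ ((k : ℝ) + 1) * ∑ m ∈ range n, (m : ℝ) ^ k := by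
        gcongr
        exact fun m hm => mem_range.2 (mem_Ioo.1 hm).2
    _ ≤ (n : ℝ) ^ (k + 1) := by linarith

theorem pow_succ_le_mul_sum_Ioc_pow (n k : ℕ) :
    (n : ℝ) ^ (k + 1) ≤ ((k : ℝ) + 1) * ∑ m ∈ Ioc 0 n, (m : ℝ) ^ k := by
  have h := (pow_left_monotoneOn (M₀ := ℝ) (n := k)).mono (fun x hx => hx.1) |>.integral_le_sum
    (x₀ := 0) (a := n)
  have hsum : ∑ i ∈ range n, ((0 : ℝ) + ((i + 1 : ℕ) : ℝ)) ^ k = ∑ m ∈ Ioc 0 n, (m : ℝ) ^ k := by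
    rw [range_eq_Ico, ← Ico_add_one_add_one_eq_Ioc, ← sum_Ico_add' (fun m : ℕ => (m : ℝ) ^ k)]
    simp
  rw [integral_pow, hsum] at h
  simp only [zero_add, ne_eq, Nat.add_eq_zero_iff, one_ne_zero, and_false,
    not_false_eq_true, zero_pow, sub_zero] at h
  rw [div_le_iff₀ (by positivity)] at h
  linarith

theorem inv_sq_sub_sum_Ioo_pow_div_mem_Icc {n : ℕ} (hn : 0 < n) (k : ℕ) :
    1 / ((k : ℝ) + 1) ^ 2 - (∑ m ∈ Ioo 0 n, (m : ℝ) ^ k) / (((k : ℝ) + 1) * (n : ℝ) ^ (k + 1))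
      ∈ Set.Icc 0 (1 / (((k : ℝ) + 1) * n)) := by
  set T := ∑ m ∈ Ioo 0 n, (m : ℝ) ^ k
  have hT : ∑ m ∈ Ioc 0 n, (m : ℝ) ^ k = T + (n : ℝ) ^ k := by
    rw [← Ioo_insert_right hn, sum_insert right_notMem_Ioo, add_comm]
  have hupper := pow_succ_le_mul_sum_Ioc_pow n k
  rw [hT] at hupper
  have hdefect : 1 / ((k : ℝ) + 1) ^ 2 - T / (((k : ℝ) + 1) * (n : ℝ) ^ (k + 1))
      = ((n : ℝ) ^ (k + 1) - ((k : ℝ) + 1) * T) / (((k : ℝ) + 1) ^ 2 * (n : ℝ) ^ (k + 1)) := by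
    field_simp
  rw [hdefect]
  constructor
  · exact div_nonneg (sub_nonneg.2 (mul_sum_Ioo_pow_le_pow_succ n k)) (by positivity)
  · rw [div_le_div_iff₀ (by positivity) (by positivity)]
    have := mul_le_mul_of_nonneg_right hupper (by positivity : (0 : ℝ) ≤ ((k : ℝ) + 1) * n)
    rw [pow_succ] at this ⊢
    nlinarith

theorem le_of_hasSum_of_le_inv_sq_of_le_inv_mul {u : ℕ → ℝ} {s : ℝ} (hs : HasSum u s) {n : ℕ}
    (hn : n ≠ 0) (hsq : ∀ k, u k ≤ 1 / ((k : ℝ) + 1) ^ 2)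
    (hlin : ∀ k, u k ≤ 1 / (((k : ℝ) + 1) * n)) :
    s ≤ ((harmonic n : ℝ) + 1) / n := by
  refine le_of_tendsto hs.tendsto_sum_nat (eventually_atTop.2 ⟨n, fun N hN => ?_⟩)
  have hhead : ∑ k ∈ range n, u k ≤ harmonic n / n := calc
    ∑ k ∈ range n, u k ≤ ∑ k ∈ range n, 1 / (((k : ℝ) + 1) * n) := sum_le_sum fun k _ => hlin k
    _ = harmonic n / n := by
      simp [harmonic, div_eq_mul_inv, mul_sum, mul_comm]
  have htail : ∑ k ∈ Ico n N, u k ≤ 1 / n := calc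
    ∑ k ∈ Ico n N, u k ≤ ∑ k ∈ Ico n N, 1 / ((k : ℝ) + 1) ^ 2 := sum_le_sum fun k _ => hsq k
    _ = ∑ i ∈ Ioc n N, ((i : ℝ) ^ 2)⁻¹ := by
      rw [← Ico_add_one_add_one_eq_Ioc, ← sum_Ico_add' (fun i : ℕ => ((i : ℝ) ^ 2)⁻¹)]
      simp
    _ ≤ (n : ℝ)⁻¹ - (N : ℝ)⁻¹ := sum_Ioc_inv_sq_le_sub hn hN
    _ ≤ 1 / n := by rw [one_div]; linarith [inv_nonneg.2 (Nat.cast_nonneg (α := ℝ) N)]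
  rw [← sum_range_add_sum_Ico _ hN, add_div]
  linarith

theorem hasSum_sum_Ioo_pow_div (n : ℕ) :
    HasSum (fun k : ℕ => (∑ m ∈ Ioo 0 n, (m : ℝ) ^ k) / (((k : ℝ) + 1) * (n : ℝ) ^ (k + 1)))
      (-∑ m ∈ Ioo 0 n, (1 : ℝ) / m * log (1 - m / n)) := by
  have hlog : ∀ m ∈ Ioo 0 n, HasSum (fun k : ℕ => (1 : ℝ) / m * (((m : ℝ) / n) ^ (k + 1) / (k + 1)))
      ((1 : ℝ) / m * -log (1 - m / n)) := by
    intro m hm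
    obtain ⟨hm0, hmn⟩ := mem_Ioo.1 hm
    have hx : |(m : ℝ) / n| < 1 := by
      rw [abs_of_nonneg (by positivity), div_lt_one (by exact_mod_cast hm0.trans hmn)]
      exact_mod_cast hmn
    exact (hasSum_pow_div_log_of_abs_lt_one hx).mul_left _
  have h := hasSum_sum hlog
  simp only [mul_neg, sum_neg_distrib] at h
  convert h using 2 with k
  rw [sum_div]
  refine sum_congr rfl fun m hm => ?_
  have hm0 : (m : ℝ) ≠ 0 := by exact_mod_cast (mem_Ioo.1 hm).1.ne'
  rw [div_pow, pow_succ (m : ℝ)]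
  field_simp

theorem sum_inv_mul_log_one_sub_div_add_pi_sq_div_six_mem_Icc {n : ℕ} (hn : 0 < n) :
    (∑ m ∈ Ioo 0 n, (1 : ℝ) / m * log (1 - m / n)) + π ^ 2 / 6 ∈
      Set.Icc 0 ((2 + log n) / n) := by
  have hbasel : HasSum (fun k : ℕ => 1 / ((k : ℝ) + 1) ^ 2) (π ^ 2 / 6) := by
    have hshift := (hasSum_nat_add_iff (f := fun k : ℕ => 1 / (k : ℝ) ^ 2) 1).2
      (by simpa using hasSum_zeta_two)
    simpa using hshift
  have h := hbasel.sub (hasSum_sum_Ioo_pow_div n)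
  rw [sub_neg_eq_add, add_comm] at h
  have hu := inv_sq_sub_sum_Ioo_pow_div_mem_Icc hn
  refine ⟨hasSum_le (fun k => (hu k).1) hasSum_zero h, ?_⟩
  calc _ ≤ ((harmonic n : ℝ) + 1) / n :=
        le_of_hasSum_of_le_inv_sq_of_le_inv_mul h hn.ne' (fun k => sub_le_self _ (by positivity))
          fun k => (hu k).2
    _ ≤ (2 + log n) / n := by
        gcongr ?_ / _
        linarith [harmonic_le_one_add_log n]

theorem sum_log_one_sub_div :
    (fun n : ℕ => (∑ m ∈ Finset.Ioo 0 n, (1 : ℝ) / m * Real.log (1 - m / n)) -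
      (-(Real.pi ^ 2 / 6)))
      =O[atTop] (fun n : ℕ => Real.log n / n) := by
  have hlog_ge : ∀ᶠ n : ℕ in atTop, 1 ≤ log n :=
    (tendsto_log_atTop.comp tendsto_natCast_atTop_atTop).eventually_ge_atTop 1
  refine IsBigO.of_bound 3 ((hlog_ge.and (eventually_gt_atTop 0)).mono fun n ⟨hlog, hn⟩ => ?_)
  obtain ⟨hlower, hupper⟩ := sum_inv_mul_log_one_sub_div_add_pi_sq_div_six_mem_Icc hn
  rw [sub_neg_eq_add, norm_of_nonneg hlower, norm_of_nonneg (by positivity)]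
  calc _ ≤ (2 + log n) / n := hupper
    _ ≤ 3 * (log n / n) := by
        rw [mul_div_assoc']
        gcongr
        linarith
end

section
/- (Mertens' theorem for F_q[t]) Let F_q be a finite field with q elements. As n → ∞, the sum over monic irreducible polynomials l ∈ F_q[t] of degree at most n of q^{-deg(l)} equals log n + A₁ + O(1/n), where A₁ = γ + Σ_{r=1}^{∞} (π_q(r) - q^r/r) q^{-r}, γ is the Euler–Mascheroni constant, and π_q(r) is the number of monic irreducible polynomials of degree r in F_q[t]. -/
/-!
Factoring the squarefree polynomial `X^(q^n) - X` into the monic irreducibles whose degree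
divides `n` gives Gauss's count `∑_{d ∣ n} d π_q(d) = q^n`. Hence `0 ≤ q^r - r π_q(r) < q^(r/2+1)`,
so the terms `(π_q(r) - q^r/r) q^{-r}` of the series in `A₁` are `O(q^{-r/2})`. Grouping the sum
by degree, `∑_{deg l ≤ n} q^{-deg l} = H_n + ∑_{r ≤ n} (π_q(r) - q^r/r) q^{-r}`; the tail of the
series is exponentially small and `H_n = log n + γ + O(1/n)`.
-/

open Filter Asymptotics Real Polynomial

/-- number of monic irreducible polynomials of degree r in F[t] -/
noncomputable def piq (F : Type*) [Field F] [Fintype F] (r : ℕ) : ℕ :=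
  Nat.card {l : Polynomial F // l.Monic ∧ Irreducible l ∧ l.natDegree = r}

/-- the constant A₁ = γ + Σ_{r≥1} (π_q(r) - q^r/r) q^{-r} -/
noncomputable def A1 (F : Type*) [Field F] [Fintype F] : ℝ :=
  Real.eulerMascheroniConstant +
    ∑' r : ℕ, if r = 0 then 0 else
      ((piq F r : ℝ) - (Fintype.card F : ℝ) ^ r / r) * ((Fintype.card F : ℝ) ^ r)⁻¹

open UniqueFactorizationMonoid

theorem Polynomial.natDegree_eq_sum_natDegree_normalizedFactors {K : Type*} [Field K]
    [DecidableEq K] (g : K[X]) : g.natDegree = ((normalizedFactors g).map natDegree).sum := by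
  rcases eq_or_ne g 0 with rfl | hg
  · simp
  conv_lhs => rw [← leadingCoeff_mul_prod_normalizedFactors g]
  rw [natDegree_C_mul (leadingCoeff_ne_zero.2 hg),
    natDegree_multiset_prod _ (zero_notMem_normalizedFactors _)]

theorem Squarefree.natDegree_eq_sum_toFinset_normalizedFactors {K : Type*} [Field K]
    [DecidableEq K] {g : K[X]} (hg : Squarefree g) :
    g.natDegree = ∑ f ∈ (normalizedFactors g).toFinset, f.natDegree := by
  rw [Finset.sum_eq_multiset_sum, Multiset.toFinset_val,
    ((squarefree_iff_nodup_normalizedFactors hg.ne_zero).1 hg).dedup,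
    natDegree_eq_sum_natDegree_normalizedFactors]

theorem Polynomial.finite_setOf_natDegree_le (R : Type*) [Semiring R] [Finite R] (n : ℕ) :
    {l : R[X] | l.natDegree ≤ n}.Finite := by
  refine Set.Finite.of_finite_image (f := fun l (i : Fin (n + 1)) => l.coeff i)
    (Set.toFinite _) fun l hl m hm hlm => Polynomial.ext fun i => ?_
  by_cases hi : i ≤ n
  · exact congrFun hlm ⟨i, Nat.lt_succ_of_le hi⟩
  · rw [coeff_eq_zero_of_natDegree_lt (lt_of_le_of_lt hl (not_le.1 hi)),
      coeff_eq_zero_of_natDegree_lt (lt_of_le_of_lt hm (not_le.1 hi))]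

theorem FiniteField.separable_X_pow_card_pow_sub_X (F : Type*) [Field F] [Fintype F] {n : ℕ}
    (hn : n ≠ 0) : (X ^ Fintype.card F ^ n - X : F[X]).Separable := by
  obtain ⟨p, hp⟩ := CharP.exists F
  exact galois_poly_separable p _
    (dvd_pow ((CharP.cast_eq_zero_iff F p _).1 (FiniteField.cast_card_eq_zero F)) hn)

theorem Nat.le_div_two_of_mem_properDivisors {d n : ℕ} (h : d ∈ n.properDivisors) :
    d ≤ n / 2 := by
  obtain ⟨⟨c, rfl⟩, hlt⟩ := Nat.mem_properDivisors.1 h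
  have hc : 2 ≤ c := by
    by_contra! hc
    interval_cases c <;> simp at hlt
  exact (Nat.le_div_iff_mul_le two_pos).2 (Nat.mul_le_mul_left d hc)

theorem Real.pow_div_two_div_pow_le {x : ℝ} (hx : 1 ≤ x) (r : ℕ) :
    x ^ (r / 2) / x ^ r ≤ (√x)⁻¹ ^ r := by
  have hx0 : 0 < x := by linarith
  have hsqrt : x ^ (r / 2) ≤ √x ^ r := by
    rw [← Real.sq_sqrt hx0.le, ← pow_mul, Real.sqrt_sq (Real.sqrt_nonneg x)]
    exact pow_le_pow_right₀ (Real.one_le_sqrt.2 hx) (Nat.mul_div_le r 2)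
  have hxr : x ^ r = √x ^ r * √x ^ r := by rw [← mul_pow, Real.mul_self_sqrt hx0.le]
  calc x ^ (r / 2) / x ^ r ≤ √x ^ r / x ^ r := by gcongr
    _ = (√x)⁻¹ ^ r := by
      rw [hxr, inv_pow]
      field_simp

theorem isBigO_pow_one_div_of_lt_one {c : ℝ} (hc0 : 0 ≤ c) (hc1 : c < 1) :
    (fun n : ℕ => c ^ n) =O[atTop] (fun n : ℕ => 1 / (n : ℝ)) := by
  have h := ((tendsto_self_mul_const_pow_of_lt_one hc0 hc1).isBigO_one ℝ).mul
    (isBigO_refl (fun n : ℕ => 1 / (n : ℝ)) atTop)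
  refine h.congr' ?_ (.of_eq (funext fun n => one_mul _))
  filter_upwards [eventually_ne_atTop 0] with n hn
  field_simp

theorem isBigO_tail_tsum_of_abs_le_geometric {f : ℕ → ℝ} {C c : ℝ} (hc0 : 0 ≤ c) (hc1 : c < 1)
    (hf : ∀ r, |f r| ≤ C * c ^ r) :
    (fun n : ℕ => ∑' r, f (r + (n + 1))) =O[atTop] (fun n : ℕ => 1 / (n : ℝ)) := by
  have htail : ∀ n : ℕ, ‖∑' r, f (r + (n + 1))‖ ≤ C * c / (1 - c) * ‖c ^ n‖ := fun n => by
    refine (tsum_of_norm_bounded ((hasSum_geometric_of_lt_one hc0 hc1).mul_left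
      (C * c ^ (n + 1))) fun r => ?_).trans_eq ?_
    · rw [Real.norm_eq_abs]
      exact (hf _).trans_eq (by ring)
    · rw [Real.norm_eq_abs, abs_of_nonneg (pow_nonneg hc0 n)]
      field_simp
      ring
  exact (IsBigO.of_bound _ (.of_forall htail)).trans (isBigO_pow_one_div_of_lt_one hc0 hc1)

theorem isBigO_harmonic_sub_log_sub_eulerMascheroniConstant :
    (fun n : ℕ => (harmonic n : ℝ) - log n - eulerMascheroniConstant) =O[atTop]
      (fun n : ℕ => 1 / (n : ℝ)) := by
  refine IsBigO.of_bound 1 ?_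
  filter_upwards [eventually_ne_atTop 0] with n hn
  have hn0 : (0 : ℝ) < n := by positivity
  have hlower : eulerMascheroniConstant < harmonic n - log n := by
    simpa [eulerMascheroniSeq', hn] using eulerMascheroniConstant_lt_eulerMascheroniSeq' n
  have hupper : harmonic n - log (n + 1) < eulerMascheroniConstant :=
    eulerMascheroniSeq_lt_eulerMascheroniConstant n
  have hlog : log (n + 1) - log n ≤ 1 / n := by
    rw [← log_div (by positivity) hn0.ne']
    refine (log_le_sub_one_of_pos (by positivity)).trans_eq ?_
    field_simp
    ring
  rw [one_mul, Real.norm_eq_abs, Real.norm_eq_abs, abs_of_pos (by positivity : (0 : ℝ) < 1 / n),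
    abs_le]
  constructor <;> linarith

section FiniteField

variable (F : Type*) [Field F] [Fintype F]

theorem piq_zero : piq F 0 = 0 := by
  rw [piq, Nat.card_eq_zero]
  exact Or.inl ⟨fun ⟨l, hm, hi, hd⟩ =>
    hi.not_isUnit (eq_one_of_monic_natDegree_zero hm hd ▸ isUnit_one)⟩

theorem sum_natDegree_eq_sum_piq_smul {M : Type*} [AddCommMonoid M] {T : Finset F[X]}
    {D : Finset ℕ} (hT : ∀ f, f ∈ T ↔ f.Monic ∧ Irreducible f ∧ f.natDegree ∈ D) (φ : ℕ → M) :
    ∑ f ∈ T, φ f.natDegree = ∑ d ∈ D, piq F d • φ d := by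
  rw [← Finset.sum_fiberwise_of_maps_to fun f hf => ((hT f).1 hf).2.2]
  refine Finset.sum_congr rfl fun d hd => ?_
  rw [Finset.sum_congr rfl fun f hf => congrArg φ (Finset.mem_filter.1 hf).2, Finset.sum_const,
    piq, Nat.subtype_card _ fun f => ?_]
  rw [Finset.mem_filter, hT]
  constructor
  · rintro ⟨⟨hm, hi, -⟩, rfl⟩
    exact ⟨hm, hi, rfl⟩
  · rintro ⟨hm, hi, rfl⟩
    exact ⟨⟨hm, hi, hd⟩, rfl⟩

theorem finsum_monicIrreducible_natDegree_le {M : Type*} [AddCommMonoid M] (φ : ℕ → M) (n : ℕ) :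
    ∑ᶠ l ∈ {l : F[X] | l.Monic ∧ Irreducible l ∧ l.natDegree ≤ n}, φ l.natDegree =
      ∑ r ∈ Finset.range (n + 1), piq F r • φ r := by
  have hfin : {l : F[X] | l.Monic ∧ Irreducible l ∧ l.natDegree ≤ n}.Finite :=
    (finite_setOf_natDegree_le F n).subset fun _ hl => hl.2.2
  rw [finsum_mem_eq_finite_toFinset_sum _ hfin]
  exact sum_natDegree_eq_sum_piq_smul F (fun f => by simp) φ

theorem sum_divisors_mul_piq {n : ℕ} (hn : n ≠ 0) :
    ∑ d ∈ n.divisors, d * piq F d = Fintype.card F ^ n := by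
  classical
  have hq : 1 < Fintype.card F := Fintype.one_lt_card
  set g : F[X] := X ^ Fintype.card F ^ n - X
  have hg : g ≠ 0 := FiniteField.X_pow_card_pow_sub_X_ne_zero F hn hq
  have hdvd_iff : ∀ {f : F[X]}, Irreducible f → (f.natDegree ∣ n ↔ f ∣ g) := fun hi => by
    rw [hi.natDegree_dvd_iff_dvd_X_pow_card_pow_sub_X, Nat.card_eq_fintype_card]
  have hfactors : ∀ f, f ∈ (normalizedFactors g).toFinset ↔
      f.Monic ∧ Irreducible f ∧ f.natDegree ∈ n.divisors := fun f => by
    rw [Multiset.mem_toFinset, Polynomial.mem_normalizedFactors_iff hg, Nat.mem_divisors,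
      and_iff_left hn]
    exact ⟨fun ⟨hi, hm, hdvd⟩ => ⟨hm, hi, (hdvd_iff hi).2 hdvd⟩,
      fun ⟨hm, hi, hdvd⟩ => ⟨hi, hm, (hdvd_iff hi).1 hdvd⟩⟩
  calc ∑ d ∈ n.divisors, d * piq F d = ∑ d ∈ n.divisors, piq F d • d :=
        Finset.sum_congr rfl fun d _ => by rw [smul_eq_mul, mul_comm]
    _ = ∑ f ∈ (normalizedFactors g).toFinset, f.natDegree :=
        (sum_natDegree_eq_sum_piq_smul F hfactors id).symm
    _ = g.natDegree :=
        ((FiniteField.separable_X_pow_card_pow_sub_X F hn).squarefree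
          |>.natDegree_eq_sum_toFinset_normalizedFactors).symm
    _ = Fintype.card F ^ n := FiniteField.X_pow_card_pow_sub_X_natDegree_eq F hn hq

theorem mul_piq_le {r : ℕ} (hr : r ≠ 0) : r * piq F r ≤ Fintype.card F ^ r :=
  sum_divisors_mul_piq F hr ▸ Finset.single_le_sum (f := fun d => d * piq F d)
    (fun _ _ => Nat.zero_le _) (Nat.mem_divisors_self r hr)

theorem pow_lt_mul_piq_add {r : ℕ} (hr : r ≠ 0) :
    Fintype.card F ^ r < r * piq F r + Fintype.card F ^ (r / 2 + 1) := by
  have hproper : ∑ d ∈ r.properDivisors, d * piq F d < Fintype.card F ^ (r / 2 + 1) :=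
    calc ∑ d ∈ r.properDivisors, d * piq F d ≤ ∑ d ∈ r.properDivisors, Fintype.card F ^ d :=
          Finset.sum_le_sum fun d hd =>
            mul_piq_le F (Nat.pos_of_mem_properDivisors hd).ne'
      _ < Fintype.card F ^ (r / 2 + 1) :=
          Nat.geomSum_lt Fintype.one_lt_card fun d hd =>
            Nat.lt_succ_of_le (Nat.le_div_two_of_mem_properDivisors hd)
  rw [← sum_divisors_mul_piq F hr, ← Nat.cons_self_properDivisors hr, Finset.sum_cons]
  exact Nat.add_lt_add_left hproper _

noncomputable def mertensTerm (r : ℕ) : ℝ :=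
  if r = 0 then 0 else
    ((piq F r : ℝ) - (Fintype.card F : ℝ) ^ r / r) * ((Fintype.card F : ℝ) ^ r)⁻¹

theorem A1_eq_add_tsum_mertensTerm : A1 F = eulerMascheroniConstant + ∑' r, mertensTerm F r :=
  rfl

theorem inv_sqrt_card_lt_one : (√(Fintype.card F : ℝ))⁻¹ < 1 :=
  inv_lt_one_of_one_lt₀ (Real.lt_sqrt_of_sq_lt (by exact_mod_cast Fintype.one_lt_card))

theorem abs_mertensTerm_le (r : ℕ) :
    |mertensTerm F r| ≤ (Fintype.card F : ℝ) * (√(Fintype.card F : ℝ))⁻¹ ^ r := by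
  rcases eq_or_ne r 0 with rfl | hr
  · simp [mertensTerm]
  have hr1 : (1 : ℝ) ≤ r := by exact_mod_cast Nat.one_le_iff_ne_zero.2 hr
  have hq : (1 : ℝ) ≤ Fintype.card F := by exact_mod_cast Fintype.card_pos
  have hlow : (r : ℝ) * piq F r ≤ (Fintype.card F : ℝ) ^ r := by exact_mod_cast mul_piq_le F hr
  have hup : (Fintype.card F : ℝ) ^ r < r * piq F r + (Fintype.card F : ℝ) ^ (r / 2 + 1) := by
    exact_mod_cast pow_lt_mul_piq_add F hr
  set q : ℝ := (Fintype.card F : ℝ)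
  have hterm : mertensTerm F r = -((q ^ r - r * piq F r) / (r * q ^ r)) := by
    rw [mertensTerm, if_neg hr]
    field_simp
    ring
  rw [hterm, abs_neg, abs_of_nonneg (by have := sub_nonneg.2 hlow; positivity)]
  calc (q ^ r - r * piq F r) / (r * q ^ r) ≤ (q ^ r - r * piq F r) / q ^ r := by
        gcongr
        exact le_mul_of_one_le_left (by positivity) hr1
    _ ≤ q ^ (r / 2 + 1) / q ^ r := by gcongr; linarith
    _ = q * (q ^ (r / 2) / q ^ r) := by ring
    _ ≤ q * (√q)⁻¹ ^ r := by gcongr; exact Real.pow_div_two_div_pow_le hq r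

theorem summable_mertensTerm : Summable (mertensTerm F) :=
  Summable.of_norm_bounded ((summable_geometric_of_lt_one (by positivity)
    (inv_sqrt_card_lt_one F)).mul_left _) (abs_mertensTerm_le F)

theorem sum_range_piq_smul_inv_pow (n : ℕ) :
    ∑ r ∈ Finset.range (n + 1), piq F r • ((Fintype.card F : ℝ) ^ r)⁻¹ =
      harmonic n + ∑ r ∈ Finset.range (n + 1), mertensTerm F r := by
  have hq : (Fintype.card F : ℝ) ≠ 0 := by exact_mod_cast Fintype.card_ne_zero
  rw [← sub_eq_iff_eq_add, ← Finset.sum_sub_distrib, Finset.sum_range_succ', harmonic]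
  simp only [mertensTerm, piq_zero, Nat.add_one_ne_zero, if_false]
  push_cast
  simp only [zero_smul, sub_zero, add_zero, nsmul_eq_mul]
  refine Finset.sum_congr rfl fun r _ => ?_
  field_simp
  ring

end FiniteField

/-- Mertens' theorem for 𝔽_q[t] -/
theorem mertens_function_field (F : Type*) [Field F] [Fintype F] :
    (fun n : ℕ =>
        (∑ᶠ l ∈ {l : Polynomial F | l.Monic ∧ Irreducible l ∧ l.natDegree ≤ n},
          ((Fintype.card F : ℝ) ^ l.natDegree)⁻¹) - (Real.log n + A1 F))
      =O[atTop] (fun n : ℕ => 1 / (n : ℝ)) := by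
  have hsplit : ∀ n : ℕ,
      (∑ᶠ l ∈ {l : Polynomial F | l.Monic ∧ Irreducible l ∧ l.natDegree ≤ n},
          ((Fintype.card F : ℝ) ^ l.natDegree)⁻¹) - (Real.log n + A1 F) =
        ((harmonic n : ℝ) - log n - eulerMascheroniConstant) -
          ∑' r, mertensTerm F (r + (n + 1)) := fun n => by
    rw [finsum_monicIrreducible_natDegree_le F (fun r => ((Fintype.card F : ℝ) ^ r)⁻¹),
      sum_range_piq_smul_inv_pow, A1_eq_add_tsum_mertensTerm,
      ← (summable_mertensTerm F).sum_add_tsum_nat_add (n + 1)]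
    ring
  exact (isBigO_harmonic_sub_log_sub_eulerMascheroniConstant.sub
    (isBigO_tail_tsum_of_abs_le_geometric (by positivity) (inv_sqrt_card_lt_one F)
      (abs_mertensTerm_le F))).congr_left fun n => (hsplit n).symm
end

section
/- Let F_q be a finite field with q elements, k ≥ 2 a fixed integer, and ω_k(f) the number of monic irreducible factors of f with multiplicity exactly k. Then the number of monic polynomials f of degree n with ω_k(f) = 0 is at least (9/32) q^n for all n ≥ 1. -/
open Filter Asymptotics Real Polynomial

/-- L(m) = Σ_{l ∈ P} |l|^{-m} -/
noncomputable def Lc (F : Type*) [Field F] [Fintype F] (m : ℕ) : ℝ :=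
  ∑' l : {l : Polynomial F // l.Monic ∧ Irreducible l},
    (((Fintype.card F : ℝ) ^ (l : Polynomial F).natDegree) ^ m)⁻¹

/-- ω_k(f): the number of distinct monic irreducible factors of f with multiplicity exactly k -/
noncomputable def omegak (F : Type*) [Field F] [Fintype F] (k : ℕ) (f : Polynomial F) : ℕ :=
  Nat.card {l : Polynomial F // l.Monic ∧ Irreducible l ∧ l ^ k ∣ f ∧ ¬ l ^ (k + 1) ∣ f}

/-!
A monic `f` of degree `n` with `ω_k(f) ≠ 0` is divisible by `l ^ k` for some monic irreducible `l`
of some degree `d` with `k d ≤ n`. There are at most `q ^ d / d` such `l` (their product divides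
`X ^ q ^ d - X`), and at most `q ^ (n - k d)` multiples of `l ^ k` among the monic polynomials of
degree `n`. As `k ≥ 2`, these `f` number at most `q ^ n * ∑_{d ≥ 1} q⁻¹ ^ d / d
= -q ^ n * log (1 - q⁻¹) ≤ q ^ n * log 2`, which leaves at least `(1 - log 2) q ^ n > 9/32 q ^ n`.
-/

open Finset
open scoped Classical

section Monic

variable (R : Type*) [CommRing R] [Fintype R]

noncomputable def monicsOfDegree (n : ℕ) : Finset R[X] :=
  univ.image fun c : Fin n → R => X ^ n + ((degreeLTEquiv R n).symm c : R[X])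

variable {R}

theorem card_monicsOfDegree (n : ℕ) : #(monicsOfDegree R n) = Fintype.card R ^ n := by
  rw [monicsOfDegree, card_image_of_injective, card_univ, Fintype.card_fun, Fintype.card_fin]
  exact (add_right_injective _).comp
    (Subtype.val_injective.comp (degreeLTEquiv R n).symm.injective)

theorem mem_monicsOfDegree [Nontrivial R] {n : ℕ} {f : R[X]} :
    f ∈ monicsOfDegree R n ↔ f.Monic ∧ f.natDegree = n := by
  have : f ∈ monicsOfDegree R n ↔ ∃ g ∈ degreeLT R n, X ^ n + g = f := by
    simp only [monicsOfDegree, mem_image, mem_univ, true_and]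
    exact ⟨fun ⟨c, hc⟩ => ⟨_, Subtype.prop _, hc⟩,
      fun ⟨g, hg, hgf⟩ => ⟨degreeLTEquiv R n ⟨g, hg⟩, by simpa using hgf⟩⟩
  rw [this]
  constructor
  · rintro ⟨g, hg, rfl⟩
    rw [mem_degreeLT] at hg
    refine ⟨monic_X_pow_add hg, ?_⟩
    rw [natDegree_add_eq_left_of_degree_lt (by rwa [degree_X_pow]), natDegree_X_pow]
  · rintro ⟨hf, rfl⟩
    refine ⟨f.eraseLead, mem_degreeLT.mpr ?_, ?_⟩
    · rw [← degree_eq_natDegree hf.ne_zero]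
      exact degree_eraseLead_lt hf.ne_zero
    · have := f.eraseLead_add_C_mul_X_pow
      rwa [hf.leadingCoeff, C_1, one_mul, add_comm] at this

theorem card_monicsOfDegree_filter_dvd_le [Nontrivial R] {g : R[X]} (hg : g.Monic) (n : ℕ) :
    #{f ∈ monicsOfDegree R n | g ∣ f} ≤ Fintype.card R ^ (n - g.natDegree) := by
  calc #{f ∈ monicsOfDegree R n | g ∣ f}
      ≤ #((monicsOfDegree R (n - g.natDegree)).image (g * ·)) := card_le_card ?_
    _ ≤ Fintype.card R ^ (n - g.natDegree) := card_image_le.trans (card_monicsOfDegree _).le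
  intro f hf
  obtain ⟨hf, h, rfl⟩ := mem_filter.mp hf
  obtain ⟨hgh, rfl⟩ := mem_monicsOfDegree.mp hf
  have hh : h.Monic := hg.of_mul_monic_left hgh
  refine mem_image.mpr ⟨h, mem_monicsOfDegree.mpr ⟨hh, ?_⟩, rfl⟩
  rw [hg.natDegree_mul hh]
  omega

end Monic

section Irreducible

variable (F : Type*) [Field F] [Fintype F]

noncomputable def monicIrreduciblesOfDegree (d : ℕ) : Finset F[X] :=
  {l ∈ monicsOfDegree F d | Irreducible l}

variable {F}

theorem mem_monicIrreduciblesOfDegree {d : ℕ} {l : F[X]} :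
    l ∈ monicIrreduciblesOfDegree F d ↔ l.Monic ∧ l.natDegree = d ∧ Irreducible l := by
  rw [monicIrreduciblesOfDegree, mem_filter, mem_monicsOfDegree, and_assoc]

theorem natDegree_mul_card_monicIrreduciblesOfDegree_le (d : ℕ) :
    d * #(monicIrreduciblesOfDegree F d) ≤ Fintype.card F ^ d := by
  rcases eq_or_ne d 0 with rfl | hd
  · simp
  have hq : 1 < Fintype.card F := Fintype.one_lt_card
  have hdvd : ∏ l ∈ monicIrreduciblesOfDegree F d, l ∣ X ^ Fintype.card F ^ d - X := by
    refine prod_dvd_of_coprime (fun l hl l' hl' hne => ?_) fun l hl => ?_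
    · obtain ⟨hm, -, hi⟩ := mem_monicIrreduciblesOfDegree.mp hl
      obtain ⟨hm', -, hi'⟩ := mem_monicIrreduciblesOfDegree.mp hl'
      exact hi.coprime_iff_not_dvd.mpr fun h =>
        hne (eq_of_monic_of_associated hm hm' (hi.associated_of_dvd hi' h))
    · obtain ⟨-, rfl, hi⟩ := mem_monicIrreduciblesOfDegree.mp hl
      rw [← Nat.card_eq_fintype_card]
      exact hi.natDegree_dvd_iff_dvd_X_pow_card_pow_sub_X.mp dvd_rfl
  have := natDegree_le_of_dvd hdvd (FiniteField.X_pow_card_pow_sub_X_ne_zero F hd hq)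
  rwa [natDegree_prod_of_monic _ _ fun l hl => (mem_monicIrreduciblesOfDegree.mp hl).1,
    FiniteField.X_pow_card_pow_sub_X_natDegree_eq F hd hq,
    sum_congr rfl fun l hl => (mem_monicIrreduciblesOfDegree.mp hl).2.1, sum_const, smul_eq_mul,
    mul_comm] at this

end Irreducible

theorem sum_Icc_pow_div_le_neg_log_one_sub {x : ℝ} (hx₀ : 0 ≤ x) (hx₁ : x < 1) (D : ℕ) :
    ∑ d ∈ Icc 1 D, x ^ d / d ≤ -log (1 - x) := by
  have hsum : HasSum (fun d : ℕ => x ^ d / d) (-log (1 - x)) := by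
    rw [← hasSum_nat_add_iff' 1]
    simpa using hasSum_pow_div_log_of_abs_lt_one (abs_lt.mpr ⟨by linarith, hx₁⟩)
  exact sum_le_hasSum _ (fun d _ => by positivity) hsum

theorem neg_log_one_sub_inv_le_log_two {q : ℝ} (hq : 2 ≤ q) : -log (1 - q⁻¹) ≤ log 2 := by
  have hq' : q⁻¹ ≤ 2⁻¹ := inv_anti₀ two_pos hq
  rw [← log_inv]
  refine log_le_log (inv_pos.mpr (by linarith)) ?_
  rw [inv_le_comm₀ (by linarith) two_pos]
  linarith

section Omega

variable {F : Type*} [Field F] [Fintype F]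

theorem exists_monic_irreducible_pow_dvd_of_omegak_ne_zero {k : ℕ} {f : F[X]}
    (h : omegak F k f ≠ 0) : ∃ l : F[X], l.Monic ∧ Irreducible l ∧ l ^ k ∣ f := by
  obtain ⟨⟨l, hl, hi, hdvd, -⟩⟩ := (Nat.card_ne_zero.mp h).1
  exact ⟨l, hl, hi, hdvd⟩

theorem card_filter_omegak_ne_zero_le {k : ℕ} (hk : 0 < k) (n : ℕ) :
    #{f ∈ monicsOfDegree F n | omegak F k f ≠ 0} ≤
      ∑ d ∈ Icc 1 (n / k), #(monicIrreduciblesOfDegree F d) * Fintype.card F ^ (n - k * d) := by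
  calc #{f ∈ monicsOfDegree F n | omegak F k f ≠ 0}
      ≤ #((Icc 1 (n / k)).biUnion fun d => (monicIrreduciblesOfDegree F d).biUnion
          fun l => {f ∈ monicsOfDegree F n | l ^ k ∣ f}) := card_le_card ?_
    _ ≤ ∑ d ∈ Icc 1 (n / k), ∑ l ∈ monicIrreduciblesOfDegree F d,
          #{f ∈ monicsOfDegree F n | l ^ k ∣ f} :=
        card_biUnion_le.trans (sum_le_sum fun d _ => card_biUnion_le)
    _ ≤ _ := sum_le_sum fun d _ => ?_
  · intro f hf
    obtain ⟨hf, hω⟩ := mem_filter.mp hf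
    obtain ⟨l, hl, hi, hdvd⟩ := exists_monic_irreducible_pow_dvd_of_omegak_ne_zero hω
    have hkd : l.natDegree * k ≤ n := by
      have := natDegree_le_of_dvd hdvd (mem_monicsOfDegree.mp hf).1.ne_zero
      rwa [natDegree_pow, (mem_monicsOfDegree.mp hf).2, mul_comm] at this
    simp only [mem_biUnion, mem_Icc, mem_filter, mem_monicIrreduciblesOfDegree]
    exact ⟨l.natDegree, ⟨hi.natDegree_pos, (Nat.le_div_iff_mul_le hk).mpr hkd⟩,
      l, ⟨hl, rfl, hi⟩, hf, hdvd⟩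
  · rw [← smul_eq_mul, ← sum_const]
    refine sum_le_sum fun l hl => ?_
    obtain ⟨hlm, rfl, -⟩ := mem_monicIrreduciblesOfDegree.mp hl
    simpa [natDegree_pow] using card_monicsOfDegree_filter_dvd_le (hlm.pow k) n

theorem card_monicIrreduciblesOfDegree_mul_pow_le {k d n : ℕ} (hk : 2 ≤ k) (hd : 0 < d)
    (hkd : k * d ≤ n) :
    (#(monicIrreduciblesOfDegree F d) * Fintype.card F ^ (n - k * d) : ℝ) ≤
      Fintype.card F ^ n * ((Fintype.card F : ℝ)⁻¹ ^ d / d) := by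
  set q := Fintype.card F
  have hq : (1 : ℝ) ≤ q := by exact_mod_cast Fintype.card_pos
  have hcard : (#(monicIrreduciblesOfDegree F d) * d : ℝ) ≤ q ^ d := by
    exact_mod_cast (mul_comm d _ ▸ natDegree_mul_card_monicIrreduciblesOfDegree_le d)
  have hpow : (q : ℝ) ^ d * q ^ d * q ^ (n - k * d) ≤ q ^ n := by
    rw [← pow_add, ← pow_add]
    refine pow_le_pow_right₀ hq ?_
    have := Nat.mul_le_mul_right d hk
    omega
  have hd' : (0 : ℝ) < d := by exact_mod_cast hd
  calc (#(monicIrreduciblesOfDegree F d) * q ^ (n - k * d) : ℝ)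
      = #(monicIrreduciblesOfDegree F d) * d * q ^ (n - k * d) / d := by field_simp
    _ ≤ q ^ d * q ^ (n - k * d) / d := by gcongr
    _ ≤ q ^ n / q ^ d / d := by
        gcongr
        rw [le_div_iff₀ (by positivity)]
        linarith
    _ = q ^ n * ((q : ℝ)⁻¹ ^ d / d) := by rw [inv_pow]; ring

theorem card_filter_omegak_ne_zero_le_log_two_mul {k : ℕ} (hk : 2 ≤ k) (n : ℕ) :
    (#{f ∈ monicsOfDegree F n | omegak F k f ≠ 0} : ℝ) ≤ log 2 * Fintype.card F ^ n := by
  set q := Fintype.card F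
  have hq : (2 : ℝ) ≤ q := by exact_mod_cast Fintype.one_lt_card
  calc (#{f ∈ monicsOfDegree F n | omegak F k f ≠ 0} : ℝ)
      ≤ ∑ d ∈ Icc 1 (n / k), (#(monicIrreduciblesOfDegree F d) * q ^ (n - k * d) : ℝ) := by
        exact_mod_cast card_filter_omegak_ne_zero_le (by omega) n
    _ ≤ ∑ d ∈ Icc 1 (n / k), (q : ℝ) ^ n * ((q : ℝ)⁻¹ ^ d / d) := by
        refine sum_le_sum fun d hd => ?_
        obtain ⟨hd, hdn⟩ := mem_Icc.mp hd
        exact card_monicIrreduciblesOfDegree_mul_pow_le hk hd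
          (mul_comm k d ▸ (Nat.le_div_iff_mul_le (by omega)).mp hdn)
    _ = q ^ n * ∑ d ∈ Icc 1 (n / k), (q : ℝ)⁻¹ ^ d / d := (mul_sum ..).symm
    _ ≤ q ^ n * -log (1 - (q : ℝ)⁻¹) := by
        gcongr
        exact sum_Icc_pow_div_le_neg_log_one_sub (by positivity)
          (inv_lt_one_of_one_lt₀ (by linarith)) _
    _ ≤ q ^ n * log 2 := by
        gcongr
        exact neg_log_one_sub_inv_le_log_two hq
    _ = log 2 * q ^ n := mul_comm ..

end Omega

theorem omega_k_zero_count_general (F : Type*) [Field F] [Fintype F] (k : ℕ) (hk : 2 ≤ k)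
    (n : ℕ) :
    (9 : ℝ) / 32 * (Fintype.card F : ℝ) ^ n ≤
      (Nat.card {f : Polynomial F // f.Monic ∧ f.natDegree = n ∧ omegak F k f = 0} : ℝ) := by
  have hgood : Nat.card {f : F[X] // f.Monic ∧ f.natDegree = n ∧ omegak F k f = 0} =
      #{f ∈ monicsOfDegree F n | omegak F k f = 0} := by
    rw [← Nat.card_eq_finsetCard]
    exact Nat.card_congr <| Equiv.subtypeEquivRight fun f => by
      rw [mem_filter, mem_monicsOfDegree, and_assoc]
  have hsplit : (#{f ∈ monicsOfDegree F n | omegak F k f = 0} : ℝ) +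
      #{f ∈ monicsOfDegree F n | omegak F k f ≠ 0} = Fintype.card F ^ n := by
    exact_mod_cast (card_filter_add_card_filter_not _).trans (card_monicsOfDegree n)
  have hbad := card_filter_omegak_ne_zero_le_log_two_mul (F := F) hk n
  rw [hgood]
  -- `1 - log 2 > 9 / 32`
  nlinarith [log_two_lt_d9, pow_nonneg (Nat.cast_nonneg (α := ℝ) (Fintype.card F)) n]

/-- At least (9/32) qⁿ monic polynomials of degree n have ω_k(f) = 0, for k ≥ 2. -/
theorem omega_k_zero_count (F : Type*) [Field F] [Fintype F] (k : ℕ) (hk : 2 ≤ k)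
    (n : ℕ) (hn : 1 ≤ n) :
    (9 : ℝ) / 32 * (Fintype.card F : ℝ) ^ n ≤
      (Nat.card {f : Polynomial F // f.Monic ∧ f.natDegree = n ∧ omegak F k f = 0} : ℝ) :=
  omega_k_zero_count_general F k hk n
end
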